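/- (Generalized Lonely Path Lemma) Let G be a finite simple graph and P a singleton-friendly frame property of colorings on G. If C is a P-optimal coloring of G, {a} and {b} are two distinct singleton color classes of C, and p_a, p_b are vertex-disjoint directed paths in the C-lonely graph L_C(G), starting at a and b respectively, each having at most one vertex in any given color class of C, then every vertex of p_a is adjacent in G to every vertex of p_b. -/

import Mathlib

open Finset

variable {V : Type*} [Fintype V] [DecidableEq V]

/-- A (proper) coloring of `G`: a partition of the vertex set into nonempty independent sets. -/
def IsColoring (G : SimpleGraph V) (C : Finset (Finset V)) : Prop :=
  (∀ I ∈ C, I.Nonempty) ∧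
  (∀ v : V, ∃! I, I ∈ C ∧ v ∈ I) ∧
  (∀ I ∈ C, ∀ v ∈ I, ∀ w ∈ I, ¬ G.Adj v w)

/-- The frame of a coloring: the multiset of the orders of its color classes. -/
def Frame (C : Finset (Finset V)) : Multiset ℕ :=
  C.val.map Finset.card

/-- The directed edge `(v, w)` is `C`-lonely: `w` lies in a color class `I` not containing `v`
and `N(v) ∩ I = {w}`. -/
def Lonely (G : SimpleGraph V) (C : Finset (Finset V)) (v w : V) : Prop :=
  ∃ I ∈ C, v ∉ I ∧ w ∈ I ∧ ∀ x ∈ I, (G.Adj v x ↔ x = w)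

/-- The chromatic number: the minimum number of color classes in a proper coloring. -/
noncomputable def chi (G : SimpleGraph V) : ℕ :=
  sInf {n | ∃ C : Finset (Finset V), IsColoring G C ∧ C.card = n}

/-- An optimal coloring: a proper coloring with `χ(G)` color classes. -/
def IsOptimalColoring (G : SimpleGraph V) (C : Finset (Finset V)) : Prop :=
  IsColoring G C ∧ C.card = chi G

/-- A (directed) path in the `C`-lonely graph `L_C(G)`, as a nonempty duplicate-free list of
vertices whose consecutive pairs are `C`-lonely edges. -/
def IsLonelyPath (G : SimpleGraph V) (C : Finset (Finset V)) (p : List V) : Prop :=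
  p ≠ [] ∧ p.Nodup ∧ List.Chain' (Lonely G C) p

/-- The stinginess `ι(G)`: the maximum number of singleton color classes appearing in an
optimal coloring of `G`. -/
noncomputable def stinginess (G : SimpleGraph V) : ℕ :=
  sSup {n | ∃ C : Finset (Finset V), IsOptimalColoring G C ∧
    (C.filter fun I => I.card = 1).card = n}

/-- The independence number `α(G)`. -/
noncomputable def indepNum (G : SimpleGraph V) : ℕ :=
  sSup {n | ∃ s : Finset V, (∀ v ∈ s, ∀ w ∈ s, ¬ G.Adj v w) ∧ s.card = n}

/-- An `r`-bounded coloring has all color classes of order at most `r`. -/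
def RBounded (r : ℕ) (C : Finset (Finset V)) : Prop :=
  ∀ I ∈ C, I.card ≤ r

/-- `χ_r(G)`: the minimum number of color classes in an `r`-bounded coloring of `G`. -/
noncomputable def chiR (G : SimpleGraph V) (r : ℕ) : ℕ :=
  sInf {n | ∃ C : Finset (Finset V), IsColoring G C ∧ RBounded r C ∧ C.card = n}

/-- An optimal `r`-bounded coloring. -/
def IsOptimalRBounded (G : SimpleGraph V) (r : ℕ) (C : Finset (Finset V)) : Prop :=
  IsColoring G C ∧ RBounded r C ∧ C.card = chiR G r

/-- `M_r(G)`: the maximum number of order-`r` color classes in an optimal `r`-bounded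
coloring of `G`. -/
noncomputable def Mr (G : SimpleGraph V) (r : ℕ) : ℕ :=
  sSup {n | ∃ C : Finset (Finset V), IsOptimalRBounded G r C ∧
    (C.filter fun I => I.card = r).card = n}

/-- The `r`-bounded stinginess `ι_r(G)`: the maximum number of singleton color classes in an
optimal `r`-bounded coloring of `G`. -/
noncomputable def stinginessR (G : SimpleGraph V) (r : ℕ) : ℕ :=
  sSup {n | ∃ C : Finset (Finset V), IsOptimalRBounded G r C ∧
    (C.filter fun I => I.card = 1).card = n}

/-- `P` is a frame property: membership in `P` only depends on the frame. -/
def IsFrameProperty (G : SimpleGraph V) (P : Finset (Finset V) → Prop) : Prop :=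
  ∀ C C' : Finset (Finset V), IsColoring G C → IsColoring G C' →
    Frame C = Frame C' → P C → P C'

/-- `P` is singleton-friendly: `P` is preserved by merging two singleton color classes. -/
def IsSingletonFriendly (G : SimpleGraph V) (P : Finset (Finset V) → Prop) : Prop :=
  ∀ C : Finset (Finset V), IsColoring G C → ∀ a b : V, a ≠ b → ¬ G.Adj a b →
    ({a} : Finset V) ∈ C → ({b} : Finset V) ∈ C → P C →
      P (insert ({a, b} : Finset V) ((C.erase {a}).erase {b}))

/-- A `P`-optimal coloring: a coloring satisfying `P` with the minimum number of color classes
among colorings satisfying `P`. -/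
def IsPOptimal (G : SimpleGraph V) (P : Finset (Finset V) → Prop)
    (C : Finset (Finset V)) : Prop :=
  IsColoring G C ∧ P C ∧
    ∀ C' : Finset (Finset V), IsColoring G C' → P C' → C.card ≤ C'.card

/-- `Frame_m(C)`: the entries of the frame of `C` that are at least `m`. -/
def FrameGe (m : ℕ) (C : Finset (Finset V)) : Multiset ℕ :=
  (Frame C).filter (fun k => m ≤ k)

/-- The matching number `ν(G)`: the maximum number of edges in a matching of `G`. -/
noncomputable def matchingNumber (G : SimpleGraph V) : ℕ :=
  sSup {n | ∃ M : G.Subgraph, M.IsMatching ∧ M.edgeSet.ncard = n}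

/-! Induct on the positions of the two vertices in their paths: let `x`, `y` be the last
vertices of initial segments `qa`, `qb` of the paths, and assume all other pairs of vertices of
`qa` and `qb` are adjacent but `x`, `y` are not. Shift the colors backwards along both paths:
every non-initial path vertex `v` passes its color to its predecessor `u`, and `x`, `y` take the
singleton colors of `a`, `b`. Since `(u, v)` is lonely, `u` has no other neighbour in the class
of `v`, and that class cannot contain a vertex of the other path (it would be adjacent to `u`),
so the shift is again a proper coloring. It has the same frame, hence satisfies `P`, and `{x}`,
`{y}` are singleton classes of it; merging them contradicts `P`-optimality. -/

namespace List

variable {α : Type*} [DecidableEq α]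

theorem formPerm_apply_of_getLast? {l : List α} {a x : α} (ha : l.head? = some a)
    (hx : l.getLast? = some x) : l.formPerm x = a := by
  obtain ⟨b, l, rfl⟩ : ∃ b l', l = b :: l' := by
    cases l with
    | nil => simp at ha
    | cons b l' => exact ⟨b, l', rfl⟩
  rw [getLast?_eq_some_getLast (cons_ne_nil b l), Option.some_inj] at hx
  rw [← hx, formPerm_apply_getLast]
  simpa using ha

theorem formPerm_inv_apply_of_getLast? {l : List α} {a x : α} (ha : l.head? = some a)
    (hx : l.getLast? = some x) : l.formPerm⁻¹ a = x :=
  Equiv.Perm.inv_eq_iff_eq.mpr (formPerm_apply_of_getLast? ha hx).symm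

theorem IsChain.rel_formPerm_inv_apply {R : α → α → Prop} {l : List α} (hl : l.IsChain R)
    (hnd : l.Nodup) {a v : α} (ha : l.head? = some a) (hv : v ∈ l) (hva : v ≠ a) :
    R (l.formPerm⁻¹ v) v := by
  obtain ⟨n, hn, rfl⟩ := getElem_of_mem hv
  obtain ⟨m, rfl⟩ : ∃ m, n = m + 1 := by
    refine Nat.exists_eq_add_one.mpr (Nat.pos_of_ne_zero fun h => hva ?_)
    subst h
    simpa [head?_eq_getElem?, getElem?_eq_getElem hn] using ha
  rw [Equiv.Perm.inv_eq_iff_eq.mpr (formPerm_apply_lt_getElem l hnd m hn).symm]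
  exact isChain_iff_getElem.mp hl m hn

theorem formPerm_inv_apply_of_notMem {l : List α} {x : α} (h : x ∉ l) : l.formPerm⁻¹ x = x :=
  Equiv.Perm.inv_eq_iff_eq.mpr (formPerm_apply_of_notMem h).symm

theorem formPerm_inv_apply_mem_of_mem {l : List α} {x : α} (h : x ∈ l) :
    l.formPerm⁻¹ x ∈ l :=
  formPerm_mem_iff_mem.mp (by simpa using h)

end List

section

omit [Fintype V] [DecidableEq V]

def relabel (π : Equiv.Perm V) (C : Finset (Finset V)) : Finset (Finset V) :=
  C.map (Finset.mapEmbedding π.toEmbedding).toEmbedding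

theorem map_mem_relabel {π : Equiv.Perm V} {C : Finset (Finset V)} {I : Finset V}
    (hI : I ∈ C) : I.map π.toEmbedding ∈ relabel π C :=
  mem_map_of_mem _ hI

theorem mem_relabel {π : Equiv.Perm V} {C : Finset (Finset V)} {J : Finset V} :
    J ∈ relabel π C ↔ ∃ I ∈ C, I.map π.toEmbedding = J := by
  simp [relabel]

theorem card_relabel (π : Equiv.Perm V) (C : Finset (Finset V)) :
    (relabel π C).card = C.card :=
  card_map _

theorem frame_relabel (π : Equiv.Perm V) (C : Finset (Finset V)) :
    Frame (relabel π C) = Frame C := by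
  simp [Frame, relabel, Multiset.map_map, Function.comp_def]

namespace IsColoring

variable {G : SimpleGraph V} {C : Finset (Finset V)}

theorem eq_of_mem (hC : IsColoring G C) {I J : Finset V} {v : V} (hI : I ∈ C) (hJ : J ∈ C)
    (hvI : v ∈ I) (hvJ : v ∈ J) : I = J :=
  (hC.2.1 v).unique ⟨hI, hvI⟩ ⟨hJ, hvJ⟩

theorem not_adj_of_lonely (hC : IsColoring G C) {u v w : V} (huv : Lonely G C u v)
    {I : Finset V} (hI : I ∈ C) (hv : v ∈ I) (hw : w ∈ I) (hwv : w ≠ v) : ¬ G.Adj u w := by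
  obtain ⟨J, hJ, -, hvJ, hadj⟩ := huv
  obtain rfl := hC.eq_of_mem hJ hI hvJ hv
  exact fun h => hwv ((hadj w hw).mp h)

theorem relabel (hC : IsColoring G C) (π : Equiv.Perm V)
    (hπ : ∀ I ∈ C, ∀ v ∈ I, ∀ w ∈ I, ¬ G.Adj (π v) (π w)) :
    IsColoring G (_root_.relabel π C) := by
  refine ⟨fun J hJ => ?_, fun v => ?_, fun J hJ => ?_⟩
  · obtain ⟨I, hI, rfl⟩ := mem_relabel.mp hJ
    exact (hC.1 I hI).map
  · obtain ⟨I, ⟨hI, hvI⟩, huniq⟩ := hC.2.1 (π.symm v)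
    refine ⟨I.map π.toEmbedding, ⟨map_mem_relabel hI, by simpa using hvI⟩, ?_⟩
    rintro J ⟨hJ, hvJ⟩
    obtain ⟨K, hK, rfl⟩ := mem_relabel.mp hJ
    rw [huniq K ⟨hK, by simpa using hvJ⟩]
  · obtain ⟨I, hI, rfl⟩ := mem_relabel.mp hJ
    simp only [mem_map_equiv]
    intro v hv w hw
    simpa using hπ I hI _ hv _ hw

theorem relabel_of_lonely (hC : IsColoring G C) (π : Equiv.Perm V)
    (hπ : ∀ I ∈ C, ∀ v ∈ I, π v ≠ v →
      I = {v} ∨ Lonely G C (π v) v ∧ ∀ w ∈ I, w ≠ v → π w = w) :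
    IsColoring G (_root_.relabel π C) := by
  refine hC.relabel π fun I hI v hv w hw => ?_
  have moved : ∀ v ∈ I, ∀ w ∈ I, w ≠ v → π v ≠ v → ¬ G.Adj (π v) (π w) := by
    intro v hv w hw hwv hπv
    rcases hπ I hI v hv hπv with rfl | ⟨hlonely, hfix⟩
    · exact absurd (mem_singleton.mp hw) hwv
    · rw [hfix w hw hwv]
      exact hC.not_adj_of_lonely hlonely hI hv hw hwv
  obtain rfl | hwv := eq_or_ne w v
  · exact G.loopless.irrefl _
  rcases eq_or_ne (π v) v with hπv | hπv
  · rcases eq_or_ne (π w) w with hπw | hπw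
    · rw [hπv, hπw]
      exact hC.2.2 I hI v hv w hw
    · exact fun h => moved w hw v hv hwv.symm hπw h.symm
  · exact moved v hv w hw hwv hπv

end IsColoring

theorem IsLonelyPath.take {G : SimpleGraph V} {C : Finset (Finset V)} {p : List V}
    (hp : IsLonelyPath G C p) (n : ℕ) : IsLonelyPath G C (p.take (n + 1)) := by
  obtain ⟨hne, hnd, hchain⟩ := hp
  exact ⟨by simpa using hne, hnd.sublist (List.take_sublist _ _), List.IsChain.take hchain _⟩

end

section

omit [Fintype V]

namespace IsColoring

variable {G : SimpleGraph V} {C : Finset (Finset V)}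

theorem mem_erase_erase_singleton_iff (hC : IsColoring G C) {x y : V}
    (hx : ({x} : Finset V) ∈ C) (hy : ({y} : Finset V) ∈ C) {I : Finset V} :
    I ∈ (C.erase {x}).erase {y} ↔ I ∈ C ∧ x ∉ I ∧ y ∉ I := by
  simp only [mem_erase]
  constructor
  · rintro ⟨hIy, hIx, hI⟩
    exact ⟨hI, fun h => hIx (hC.eq_of_mem hI hx h (mem_singleton_self x)),
      fun h => hIy (hC.eq_of_mem hI hy h (mem_singleton_self y))⟩
  · rintro ⟨hI, hxI, hyI⟩
    exact ⟨by rintro rfl; simp at hyI, by rintro rfl; simp at hxI, hI⟩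

theorem merge (hC : IsColoring G C) {x y : V} (hxy : x ≠ y) (hadj : ¬ G.Adj x y)
    (hx : ({x} : Finset V) ∈ C) (hy : ({y} : Finset V) ∈ C) :
    IsColoring G (insert {x, y} ((C.erase {x}).erase {y})) ∧
      (insert {x, y} ((C.erase {x}).erase {y})).card + 1 = C.card := by
  have hmem := fun I => hC.mem_erase_erase_singleton_iff hx hy (I := I)
  have hxy_notMem : {x, y} ∉ (C.erase {x}).erase {y} := fun h => ((hmem _).mp h).2.1 (by simp)
  refine ⟨⟨?_, fun v => ?_, ?_⟩, ?_⟩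
  · simp only [mem_insert, hmem]
    rintro I (rfl | ⟨hI, -⟩)
    exacts [insert_nonempty _ _, hC.1 I hI]
  · by_cases hv : v = x ∨ v = y
    · refine ⟨{x, y}, ⟨mem_insert_self _ _, by simpa using hv⟩, ?_⟩
      rintro J ⟨hJ, hvJ⟩
      rcases mem_insert.mp hJ with rfl | hJ
      · rfl
      · obtain ⟨-, hxJ, hyJ⟩ := (hmem J).mp hJ
        rcases hv with rfl | rfl <;> contradiction
    · rw [not_or] at hv
      obtain ⟨I, ⟨hI, hvI⟩, huniq⟩ := hC.2.1 v
      have hID : I ∈ (C.erase {x}).erase {y} := (hmem I).mpr ⟨hI,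
        fun h => hv.1 (mem_singleton.mp (hC.eq_of_mem hI hx h (mem_singleton_self x) ▸ hvI)),
        fun h => hv.2 (mem_singleton.mp (hC.eq_of_mem hI hy h (mem_singleton_self y) ▸ hvI))⟩
      refine ⟨I, ⟨mem_insert_of_mem hID, hvI⟩, ?_⟩
      rintro J ⟨hJ, hvJ⟩
      rcases mem_insert.mp hJ with rfl | hJ
      · simp [hv.1, hv.2] at hvJ
      · exact huniq J ⟨((hmem J).mp hJ).1, hvJ⟩
  · intro I hI v hv w hw
    rcases mem_insert.mp hI with rfl | hI
    · simp only [mem_insert, mem_singleton] at hv hw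
      rcases hv with rfl | rfl <;> rcases hw with rfl | rfl
      exacts [G.loopless.irrefl _, hadj, fun h => hadj h.symm, G.loopless.irrefl _]
    · exact hC.2.2 I ((hmem I).mp hI).1 v hv w hw
  · have hy' : {y} ∈ C.erase {x} := mem_erase.mpr ⟨by simpa using hxy.symm, hy⟩
    rw [card_insert_of_notMem hxy_notMem, card_erase_add_one hy', card_erase_add_one hx]

theorem lonely_move_of_mem_path (hC : IsColoring G C) {qa qb : List V} {a x : V}
    (hqa : IsLonelyPath G C qa)
    (hheada : qa.head? = some a) (hlasta : qa.getLast? = some x) (ha : ({a} : Finset V) ∈ C)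
    (hclassa : ∀ I ∈ C, ∀ u ∈ qa, ∀ w ∈ qa, u ∈ I → w ∈ I → u = w)
    (hcross : ∀ u ∈ qa, ∀ w ∈ qb, u ≠ x → G.Adj u w) {π : Equiv.Perm V}
    (hπa : ∀ v ∈ qa, π v = qa.formPerm⁻¹ v) (hπfix : ∀ v, v ∉ qa → v ∉ qb → π v = v)
    {I : Finset V} (hI : I ∈ C) {v : V} (hvI : v ∈ I) (hv : v ∈ qa) :
    I = {v} ∨ Lonely G C (π v) v ∧ ∀ w ∈ I, w ≠ v → π w = w := by
  obtain rfl | hva := eq_or_ne v a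
  · exact Or.inl (hC.eq_of_mem hI ha hvI (mem_singleton_self v))
  have hlonely : Lonely G C (π v) v := by
    rw [hπa v hv]
    exact List.IsChain.rel_formPerm_inv_apply hqa.2.2 hqa.2.1 hheada hv hva
  refine Or.inr ⟨hlonely, fun w hw hwv =>
    hπfix w (fun hwa => hwv (hclassa I hI w hwa v hv hw hvI)) fun hwb =>
      hC.not_adj_of_lonely hlonely hI hvI hw hwv (hcross _ ?_ w hwb ?_)⟩
  · exact hπa v hv ▸ List.formPerm_inv_apply_mem_of_mem hv
  · rw [hπa v hv, ← List.formPerm_inv_apply_of_getLast? hheada hlasta]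
    exact fun h => hva ((qa.formPerm⁻¹).injective h)

end IsColoring

theorem IsPOptimal.adj_of_relabel {G : SimpleGraph V} {P : Finset (Finset V) → Prop}
    {C : Finset (Finset V)} (hFrame : IsFrameProperty G P) (hSF : IsSingletonFriendly G P)
    (hC : IsPOptimal G P C) {a b : V} (hab : a ≠ b) (ha : ({a} : Finset V) ∈ C)
    (hb : ({b} : Finset V) ∈ C) {π : Equiv.Perm V} (hπ : IsColoring G (relabel π C)) :
    G.Adj (π a) (π b) := by
  obtain ⟨hCcol, hCP, hCmin⟩ := hC
  by_contra hadj
  have hP : P (relabel π C) := hFrame C _ hCcol hπ (frame_relabel π C).symm hCP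
  have hπa : ({π a} : Finset V) ∈ relabel π C := by simpa using map_mem_relabel (π := π) ha
  have hπb : ({π b} : Finset V) ∈ relabel π C := by simpa using map_mem_relabel (π := π) hb
  have hπab : π a ≠ π b := π.injective.ne hab
  obtain ⟨hmerged, hcard⟩ := hπ.merge hπab hadj hπa hπb
  have := hCmin _ hmerged (hSF _ hπ _ _ hπab hadj hπa hπb hP)
  rw [card_relabel] at hcard
  omega

theorem IsPOptimal.adj_of_isLonelyPath {G : SimpleGraph V} {P : Finset (Finset V) → Prop}
    {C : Finset (Finset V)} (hFrame : IsFrameProperty G P) (hSF : IsSingletonFriendly G P)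
    (hC : IsPOptimal G P C) {a b x y : V} (ha : ({a} : Finset V) ∈ C)
    (hb : ({b} : Finset V) ∈ C) {qa qb : List V}
    (hqa : IsLonelyPath G C qa) (hqb : IsLonelyPath G C qb)
    (hheada : qa.head? = some a) (hheadb : qb.head? = some b)
    (hlasta : qa.getLast? = some x) (hlastb : qb.getLast? = some y)
    (hclassa : ∀ I ∈ C, ∀ u ∈ qa, ∀ w ∈ qa, u ∈ I → w ∈ I → u = w)
    (hclassb : ∀ I ∈ C, ∀ u ∈ qb, ∀ w ∈ qb, u ∈ I → w ∈ I → u = w)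
    (hdisj : ∀ u ∈ qa, u ∉ qb) (hcross : ∀ u ∈ qa, ∀ w ∈ qb, u ≠ x ∨ w ≠ y → G.Adj u w) :
    G.Adj x y := by
  -- `π` moves each vertex of a path to its predecessor and each head to the end of its path.
  set π : Equiv.Perm V := qa.formPerm⁻¹ * qb.formPerm⁻¹
  have hπa : ∀ v ∈ qa, π v = qa.formPerm⁻¹ v := fun v hv => by
    simp only [π, Equiv.Perm.mul_apply, List.formPerm_inv_apply_of_notMem (hdisj v hv)]
  have hπb : ∀ v ∈ qb, π v = qb.formPerm⁻¹ v := fun v hv => by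
    simp only [π, Equiv.Perm.mul_apply]
    exact List.formPerm_inv_apply_of_notMem fun h =>
      hdisj _ h (List.formPerm_inv_apply_mem_of_mem hv)
  have hπfix : ∀ v, v ∉ qa → v ∉ qb → π v = v := fun v hva hvb => by
    simp only [π, Equiv.Perm.mul_apply, List.formPerm_inv_apply_of_notMem hva,
      List.formPerm_inv_apply_of_notMem hvb]
  have hrelabel : IsColoring G (relabel π C) := by
    refine hC.1.relabel_of_lonely π fun I hI v hvI hπv => ?_
    by_cases hva : v ∈ qa
    · exact hC.1.lonely_move_of_mem_path hqa hheada hlasta ha hclassa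
        (fun u hu w hw hux => hcross u hu w hw (Or.inl hux)) hπa hπfix hI hvI hva
    by_cases hvb : v ∈ qb
    · exact hC.1.lonely_move_of_mem_path hqb hheadb hlastb hb hclassb
        (fun w hw u hu hwy => (hcross u hu w hw (Or.inr hwy)).symm) hπb
        (fun v hvb hva => hπfix v hva hvb) hI hvI hvb
    · exact absurd (hπfix v hva hvb) hπv
  have hab : a ≠ b := fun h =>
    hdisj a (List.mem_of_head? hheada) (h ▸ List.mem_of_head? hheadb)
  have hadj := hC.adj_of_relabel hFrame hSF hab ha hb hrelabel
  rwa [hπa a (List.mem_of_head? hheada), hπb b (List.mem_of_head? hheadb),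
    List.formPerm_inv_apply_of_getLast? hheada hlasta,
    List.formPerm_inv_apply_of_getLast? hheadb hlastb] at hadj

end

theorem statement_12_general (G : SimpleGraph V) (P : Finset (Finset V) → Prop)
    (hFrame : IsFrameProperty G P) (hSF : IsSingletonFriendly G P)
    (C : Finset (Finset V)) (hC : IsPOptimal G P C)
    (a b : V) (ha : ({a} : Finset V) ∈ C) (hb : ({b} : Finset V) ∈ C)
    (pa pb : List V)
    (hpa : IsLonelyPath G C pa) (hpb : IsLonelyPath G C pb)
    (hheada : pa.head? = some a) (hheadb : pb.head? = some b)
    (hclassa : ∀ I ∈ C, ∀ x ∈ pa, ∀ y ∈ pa, x ∈ I → y ∈ I → x = y)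
    (hclassb : ∀ I ∈ C, ∀ x ∈ pb, ∀ y ∈ pb, x ∈ I → y ∈ I → x = y)
    (hdisj : ∀ x ∈ pa, x ∉ pb) :
    ∀ x ∈ pa, ∀ y ∈ pb, G.Adj x y := by
  simp only [List.mem_iff_getElem, forall_exists_index]
  rintro _ i hi rfl _ j hj rfl
  induction hn : i + j using Nat.strong_induction_on generalizing i j with
  | _ n ih =>
    refine hC.adj_of_isLonelyPath hFrame hSF ha hb (hpa.take i) (hpb.take j)
      (by simpa [List.head?_take] using hheada) (by simpa [List.head?_take] using hheadb)
      (by simp [List.getLast?_take, hi]) (by simp [List.getLast?_take, hj])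
      (fun I hI u hu w hw => hclassa I hI u (List.mem_of_mem_take hu) w (List.mem_of_mem_take hw))
      (fun I hI u hu w hw => hclassb I hI u (List.mem_of_mem_take hu) w (List.mem_of_mem_take hw))
      (fun u hu hu' => hdisj u (List.mem_of_mem_take hu) (List.mem_of_mem_take hu'))
      fun u hu w hw hne => ?_
    obtain ⟨s, hs, rfl⟩ := List.mem_take_iff_getElem.mp hu
    obtain ⟨t, ht, rfl⟩ := List.mem_take_iff_getElem.mp hw
    have hst : s ≠ i ∨ t ≠ j := by
      rcases hne with hne | hne
      exacts [Or.inl fun h => hne (by simp [h]), Or.inr fun h => hne (by simp [h])]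
    exact ih (s + t) (by omega) s _ t _ rfl

theorem statement_12 (G : SimpleGraph V) (P : Finset (Finset V) → Prop)
    (hFrame : IsFrameProperty G P) (hSF : IsSingletonFriendly G P)
    (C : Finset (Finset V)) (hC : IsPOptimal G P C)
    (a b : V) (hab : a ≠ b) (ha : ({a} : Finset V) ∈ C) (hb : ({b} : Finset V) ∈ C)
    (pa pb : List V)
    (hpa : IsLonelyPath G C pa) (hpb : IsLonelyPath G C pb)
    (hheada : pa.head? = some a) (hheadb : pb.head? = some b)
    (hclassa : ∀ I ∈ C, ∀ x ∈ pa, ∀ y ∈ pa, x ∈ I → y ∈ I → x = y)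
    (hclassb : ∀ I ∈ C, ∀ x ∈ pb, ∀ y ∈ pb, x ∈ I → y ∈ I → x = y)
    (hdisj : ∀ x ∈ pa, x ∉ pb) :
    ∀ x ∈ pa, ∀ y ∈ pb, G.Adj x y :=
  statement_12_general G P hFrame hSF C hC a b ha hb pa pb hpa hpb hheada hheadb hclassa hclassb
    hdisj
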